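/- arXiv:2605.22265 — 2 statements merged into one kernel-verified Lean document; each statement's English description precedes it below -/
import Mathlib

section
/- Let n, d, N be natural numbers with n ≥ 1, let δ > 0 and t > 0, let μ be a finite Borel measure on ℝ^d, let p ∈ ℝ^d, let f : ℝ^d → ℝ^N be a measurable function with ‖f(y)‖ ≤ F for all y ∈ ℝ^d, and let χ : ℝ^d → ℝ be measurable with 0 ≤ χ(y) ≤ 1 for all y and χ(y) = 1 whenever ‖y − p‖ ≤ δ/2. Then ‖∫ f(y) Φ_t(p,y) χ(y) dμ(y) − ∫ f(y) Φ_t(p,y) dμ(y)‖ ≤ F · μ(ℝ^d) · (4π t)^{-n/2} · exp(−δ²/(16 t)). -/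
open MeasureTheory

/-- The error of truncating the extrinsic Gaussian kernel
`Φ_t(x,y) = (4πt)^{-n/2} exp(-‖x-y‖²/(4t))` via a soft cut-off `χ` (which equals 1 on
the half-ball of radius `δ/2` around `p`) is bounded by
`F · μ(ℝ^d) · (4πt)^{-n/2} · exp(-δ²/(16t))`. -/
theorem stmt0 (n d N : ℕ) (hn : 1 ≤ n) (δ t : ℝ) (hδ : 0 < δ) (ht : 0 < t)
    (μ : Measure (EuclideanSpace ℝ (Fin d))) [IsFiniteMeasure μ]
    (p : EuclideanSpace ℝ (Fin d))
    (f : EuclideanSpace ℝ (Fin d) → EuclideanSpace ℝ (Fin N))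
    (hf : Measurable f) (F : ℝ) (hF : ∀ y, ‖f y‖ ≤ F)
    (χ : EuclideanSpace ℝ (Fin d) → ℝ) (hχm : Measurable χ)
    (hχ0 : ∀ y, 0 ≤ χ y) (hχ1 : ∀ y, χ y ≤ 1)
    (hχeq : ∀ y, ‖y - p‖ ≤ δ / 2 → χ y = 1) :
    ‖(∫ y, ((4 * Real.pi * t) ^ (-(n : ℝ) / 2) * Real.exp (-‖p - y‖ ^ 2 / (4 * t)) * χ y) • f y ∂μ)
        - ∫ y, ((4 * Real.pi * t) ^ (-(n : ℝ) / 2) * Real.exp (-‖p - y‖ ^ 2 / (4 * t))) • f y ∂μ‖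
      ≤ F * (μ Set.univ).toReal * (4 * Real.pi * t) ^ (-(n : ℝ) / 2)
          * Real.exp (-δ ^ 2 / (16 * t)) := by
  set A : ℝ := (4 * Real.pi * t) ^ (-(n : ℝ) / 2) with hA
  have hApos : 0 < A := Real.rpow_pos_of_pos (by positivity) _
  have hF0 : 0 ≤ F := le_trans (norm_nonneg _) (hF p)
  set C : ℝ := F * A * Real.exp (-δ ^ 2 / (16 * t)) with hC
  have hC0 : 0 ≤ C := by positivity
  -- integrability
  have hm1 : AEStronglyMeasurable
      (fun y => (A * Real.exp (-‖p - y‖ ^ 2 / (4 * t)) * χ y) • f y) μ := by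
    apply AEStronglyMeasurable.fun_smul _ hf.aestronglyMeasurable
    exact (((measurable_const.mul
      (((measurable_const.sub measurable_id).norm.pow measurable_const).neg.div_const _).exp).mul
      hχm)).aestronglyMeasurable
  have hm2 : AEStronglyMeasurable
      (fun y => (A * Real.exp (-‖p - y‖ ^ 2 / (4 * t))) • f y) μ := by
    apply AEStronglyMeasurable.fun_smul _ hf.aestronglyMeasurable
    exact ((measurable_const.mul
      (((measurable_const.sub measurable_id).norm.pow measurable_const).neg.div_const _).exp)).aestronglyMeasurable
  have hexp1 : ∀ y : EuclideanSpace ℝ (Fin d), Real.exp (-‖p - y‖ ^ 2 / (4 * t)) ≤ 1 := by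
    intro y
    apply Real.exp_le_one_iff.2
    have : (0:ℝ) ≤ ‖p - y‖ ^ 2 := sq_nonneg _
    have h4t : (0:ℝ) < 4 * t := by linarith
    exact div_nonpos_of_nonpos_of_nonneg (by linarith) h4t.le
  have hi1 : Integrable (fun y => (A * Real.exp (-‖p - y‖ ^ 2 / (4 * t)) * χ y) • f y) μ := by
    refine ⟨hm1, ?_⟩
    apply HasFiniteIntegral.of_bounded (C := A * F)
    filter_upwards with y
    rw [norm_smul]
    have h1 : ‖A * Real.exp (-‖p - y‖ ^ 2 / (4 * t)) * χ y‖ ≤ A := by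
      rw [Real.norm_eq_abs, abs_of_nonneg (mul_nonneg (by positivity) (hχ0 y))]
      calc A * Real.exp (-‖p - y‖ ^ 2 / (4 * t)) * χ y
          ≤ A * 1 * 1 := by
            apply mul_le_mul (mul_le_mul le_rfl (hexp1 y) (Real.exp_pos _).le hApos.le)
              (hχ1 y) (hχ0 y) (by positivity)
        _ = A := by ring
    exact mul_le_mul h1 (hF y) (norm_nonneg _) hApos.le
  have hi2 : Integrable (fun y => (A * Real.exp (-‖p - y‖ ^ 2 / (4 * t))) • f y) μ := by
    refine ⟨hm2, ?_⟩
    apply HasFiniteIntegral.of_bounded (C := A * F)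
    filter_upwards with y
    rw [norm_smul]
    have h1 : ‖A * Real.exp (-‖p - y‖ ^ 2 / (4 * t))‖ ≤ A := by
      rw [Real.norm_eq_abs, abs_of_nonneg (by positivity)]
      calc A * Real.exp (-‖p - y‖ ^ 2 / (4 * t)) ≤ A * 1 :=
            mul_le_mul le_rfl (hexp1 y) (Real.exp_pos _).le hApos.le
        _ = A := by ring
    exact mul_le_mul h1 (hF y) (norm_nonneg _) hApos.le
  rw [← integral_sub hi1 hi2]
  have hbound : ∀ y, ‖(A * Real.exp (-‖p - y‖ ^ 2 / (4 * t)) * χ y) • f y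
      - (A * Real.exp (-‖p - y‖ ^ 2 / (4 * t))) • f y‖ ≤ C := by
    intro y
    rw [← sub_smul, norm_smul]
    by_cases hy : ‖y - p‖ ≤ δ / 2
    · rw [hχeq y hy]
      simp [hC0]
    · push_neg at hy
      have hnorm : δ / 2 ≤ ‖p - y‖ := by
        rw [norm_sub_rev]; exact hy.le
      have hexp : Real.exp (-‖p - y‖ ^ 2 / (4 * t)) ≤ Real.exp (-δ ^ 2 / (16 * t)) := by
        apply Real.exp_le_exp.2
        have h4t : (0:ℝ) < 4 * t := by linarith
        rw [div_le_div_iff₀ h4t (by linarith : (0:ℝ) < 16 * t)]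
        nlinarith [mul_le_mul hnorm hnorm (by positivity : (0:ℝ) ≤ δ / 2) (norm_nonneg (p - y)), ht]
      have hχabs : |χ y - 1| ≤ 1 := by
        rw [abs_le]; constructor <;> [linarith [hχ0 y]; linarith [hχ1 y]]
      have h1 : ‖A * Real.exp (-‖p - y‖ ^ 2 / (4 * t)) * χ y
          - A * Real.exp (-‖p - y‖ ^ 2 / (4 * t))‖
          ≤ A * Real.exp (-δ ^ 2 / (16 * t)) := by
        have : A * Real.exp (-‖p - y‖ ^ 2 / (4 * t)) * χ y
            - A * Real.exp (-‖p - y‖ ^ 2 / (4 * t))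
            = (A * Real.exp (-‖p - y‖ ^ 2 / (4 * t))) * (χ y - 1) := by ring
        rw [this, Real.norm_eq_abs, abs_mul, abs_of_nonneg (by positivity)]
        calc A * Real.exp (-‖p - y‖ ^ 2 / (4 * t)) * |χ y - 1|
            ≤ A * Real.exp (-δ ^ 2 / (16 * t)) * 1 := by
              apply mul_le_mul (mul_le_mul le_rfl hexp (Real.exp_pos _).le hApos.le)
                hχabs (abs_nonneg _) (by positivity)
          _ = A * Real.exp (-δ ^ 2 / (16 * t)) := by ring
      calc ‖A * Real.exp (-‖p - y‖ ^ 2 / (4 * t)) * χ y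
            - A * Real.exp (-‖p - y‖ ^ 2 / (4 * t))‖ * ‖f y‖
          ≤ (A * Real.exp (-δ ^ 2 / (16 * t))) * F :=
            mul_le_mul h1 (hF y) (norm_nonneg _) (by positivity)
        _ = C := by rw [hC]; ring
  have := norm_integral_le_of_norm_le_const (μ := μ) (C := C)
    (f := fun y => (A * Real.exp (-‖p - y‖ ^ 2 / (4 * t)) * χ y) • f y
      - (A * Real.exp (-‖p - y‖ ^ 2 / (4 * t))) • f y)
    (Filter.Eventually.of_forall hbound)
  calc ‖∫ y, ((A * Real.exp (-‖p - y‖ ^ 2 / (4 * t)) * χ y) • f y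
        - (A * Real.exp (-‖p - y‖ ^ 2 / (4 * t))) • f y) ∂μ‖
      ≤ C * (μ Set.univ).toReal := this
    _ = F * (μ Set.univ).toReal * A * Real.exp (-δ ^ 2 / (16 * t)) := by rw [hC]; ring
end

section
/- Fix x ∈ ℝ^d and t > 0. The map from ℝ^d to the continuous linear endomorphisms of ℝ^d sending p to the rank-one operator v ↦ exp(−‖x − p‖²/(4t)) · ⟨x − p, v⟩ · (x − p) (that is, p ↦ e^{−‖x−p‖²/(4t)} (x−p)(x−p)ᵀ) is Lipschitz with constant 8 e^{-1} √t with respect to the operator norm on endomorphisms. -/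
/-!
At a point `u` with `‖u‖ = r`, the derivative of `u ↦ e^{-‖u‖²/(4t)} u uᵀ` has operator norm at
most `e^{-r²/(4t)} (2r + r³/(2t))`. Writing `r = 2√t s` this is `4√t e^{-s²} (s + s³)`, and
`e^{-s²} (s + s³) ≤ 2/e` because `2s ≤ 1 + s²` and `1 + y ≤ e^y` at `y = (s² - 1)/2`, both equalities
at `s = 1`. The mean value inequality turns the derivative bound `8√t/e` into the Lipschitz bound.
-/

open Real InnerProductSpace ContinuousLinearMap

theorem exp_neg_sq_mul_add_cube_le (s : ℝ) : exp (-s ^ 2) * (s + s ^ 3) ≤ 2 * exp (-1) := by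
  have hexp : (1 + s ^ 2) / 2 ≤ exp ((s ^ 2 - 1) / 2) := by
    linarith [add_one_le_exp ((s ^ 2 - 1) / 2)]
  have hpoly : s + s ^ 3 ≤ 2 * exp (s ^ 2 - 1) :=
    calc s + s ^ 3 ≤ 2 * ((1 + s ^ 2) / 2) ^ 2 := by nlinarith [sq_nonneg (s - 1)]
      _ ≤ 2 * exp ((s ^ 2 - 1) / 2) ^ 2 := by gcongr
      _ = 2 * exp (s ^ 2 - 1) := by rw [← exp_nat_mul]; ring_nf
  calc exp (-s ^ 2) * (s + s ^ 3) ≤ exp (-s ^ 2) * (2 * exp (s ^ 2 - 1)) := by gcongr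
    _ = 2 * exp (-1) := by rw [mul_left_comm, ← exp_add]; ring_nf

theorem exp_neg_sq_div_mul_le {t : ℝ} (ht : 0 < t) (r : ℝ) :
    exp (-r ^ 2 / (4 * t)) * (2 * r + r ^ 3 / (2 * t)) ≤ 8 * exp (-1) * √t := by
  obtain ⟨w, hw, rfl⟩ : ∃ w, 0 < w ∧ t = w ^ 2 := ⟨√t, sqrt_pos.mpr ht, (sq_sqrt ht.le).symm⟩
  rw [sqrt_sq hw.le]
  calc exp (-r ^ 2 / (4 * w ^ 2)) * (2 * r + r ^ 3 / (2 * w ^ 2))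
      = 4 * w * (exp (-(r / (2 * w)) ^ 2) * (r / (2 * w) + (r / (2 * w)) ^ 3)) := by
        field_simp; ring_nf
    _ ≤ 4 * w * (2 * exp (-1)) :=
        mul_le_mul_of_nonneg_left (exp_neg_sq_mul_add_cube_le _) (by positivity)
    _ = 8 * exp (-1) * w := by ring

section

variable {E : Type*} [NormedAddCommGroup E] [InnerProductSpace ℝ E]

/-- `rankOne ℝ`, whose conjugate-linearity in the second argument is plain `ℝ`-linearity. -/
noncomputable def rankOneL : E →L[ℝ] E →L[ℝ] E →L[ℝ] E := rankOne ℝ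

@[simp] theorem rankOneL_apply (u v : E) : rankOneL u v = rankOne ℝ u v := rfl

theorem hasFDerivAt_rankOne_self (u : E) :
    HasFDerivAt (fun v : E => rankOne ℝ v v) (rankOneL.flip u + rankOneL u) u := by
  refine (rankOneL.hasFDerivAt_of_bilinear (hasFDerivAt_id u) (hasFDerivAt_id u)).congr_fderiv ?_
  ext h : 1
  simp [add_comm]

theorem norm_rankOneL_flip_add_le (u : E) : ‖rankOneL.flip u + rankOneL u‖ ≤ 2 * ‖u‖ := by
  refine opNorm_le_bound _ (by positivity) fun h => ?_
  rw [add_apply, flip_apply, rankOneL_apply, rankOneL_apply]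
  calc ‖rankOne ℝ h u + rankOne ℝ u h‖ ≤ ‖rankOne ℝ h u‖ + ‖rankOne ℝ u h‖ := norm_add_le _ _
    _ = 2 * ‖u‖ * ‖h‖ := by simp only [norm_rankOne]; ring

theorem hasFDerivAt_exp_neg_norm_sq_div (t : ℝ) (u : E) :
    HasFDerivAt (fun v : E => exp (-‖v‖ ^ 2 / (4 * t)))
      (-(exp (-‖u‖ ^ 2 / (4 * t)) / (2 * t)) • innerSL ℝ u) u := by
  simp_rw [div_eq_mul_inv]
  refine ((hasFDerivAt_id u).norm_sq.neg.mul_const (4 * t)⁻¹).exp.congr_fderiv ?_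
  ext h
  simp
  ring

theorem hasFDerivAt_exp_neg_norm_sq_div_smul_rankOne_self (t : ℝ) (u : E) :
    HasFDerivAt (fun v : E => exp (-‖v‖ ^ 2 / (4 * t)) • rankOne ℝ v v)
      (exp (-‖u‖ ^ 2 / (4 * t)) • (rankOneL.flip u + rankOneL u) +
        (-(exp (-‖u‖ ^ 2 / (4 * t)) / (2 * t)) • innerSL ℝ u).smulRight (rankOne ℝ u u)) u :=
  (hasFDerivAt_exp_neg_norm_sq_div t u).smul (hasFDerivAt_rankOne_self u)

theorem norm_fderiv_exp_neg_norm_sq_div_smul_rankOne_self_le {t : ℝ} (ht : 0 ≤ t) (u : E) :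
    ‖exp (-‖u‖ ^ 2 / (4 * t)) • (rankOneL.flip u + rankOneL u) +
        (-(exp (-‖u‖ ^ 2 / (4 * t)) / (2 * t)) • innerSL ℝ u).smulRight (rankOne ℝ u u)‖ ≤
      exp (-‖u‖ ^ 2 / (4 * t)) * (2 * ‖u‖ + ‖u‖ ^ 3 / (2 * t)) := by
  set c := exp (-‖u‖ ^ 2 / (4 * t))
  have hc : 0 < c := exp_pos _
  calc _ ≤ ‖c • (rankOneL.flip u + rankOneL u)‖ +
          ‖(-(c / (2 * t)) • innerSL ℝ u).smulRight (rankOne ℝ u u)‖ := norm_add_le _ _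
    _ ≤ c * (2 * ‖u‖) + c / (2 * t) * ‖u‖ * ‖u‖ ^ 2 := by
        rw [norm_smul, norm_smulRight_apply, norm_smul, norm_neg, innerSL_apply_norm,
          norm_rankOne, Real.norm_of_nonneg hc.le, Real.norm_of_nonneg (by positivity), ← sq]
        gcongr
        exact norm_rankOneL_flip_add_le u
    _ = c * (2 * ‖u‖ + ‖u‖ ^ 3 / (2 * t)) := by ring

theorem norm_exp_neg_norm_sq_div_smul_rankOne_self_sub_le {t : ℝ} (ht : 0 < t) (u v : E) :
    ‖exp (-‖u‖ ^ 2 / (4 * t)) • rankOne ℝ u u - exp (-‖v‖ ^ 2 / (4 * t)) • rankOne ℝ v v‖ ≤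
      8 * exp (-1) * √t * ‖u - v‖ :=
  convex_univ.norm_image_sub_le_of_norm_hasFDerivWithin_le
    (fun w _ => (hasFDerivAt_exp_neg_norm_sq_div_smul_rankOne_self t w).hasFDerivWithinAt)
    (fun w _ => (norm_fderiv_exp_neg_norm_sq_div_smul_rankOne_self_le ht.le w).trans
      (exp_neg_sq_div_mul_le ht ‖w‖))
    (Set.mem_univ v) (Set.mem_univ u)

end

/-- for fixed `x ∈ ℝ^d` and `t > 0`, the map
`p ↦ e^{-‖x-p‖²/(4t)} (x-p)(x-p)ᵀ`, sending `p` to the rank-one operator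
`v ↦ e^{-‖x-p‖²/(4t)} ⟨x-p, v⟩ (x-p)`, is Lipschitz with constant `8 e^{-1} √t`
with respect to the operator norm. -/
theorem stmt11 (d : ℕ) (x : EuclideanSpace ℝ (Fin d)) (t : ℝ) (ht : 0 < t) :
    ∀ p q : EuclideanSpace ℝ (Fin d),
      ‖Real.exp (-‖x - p‖ ^ 2 / (4 * t)) • ((innerSL ℝ (x - p)).smulRight (x - p))
          - Real.exp (-‖x - q‖ ^ 2 / (4 * t)) • ((innerSL ℝ (x - q)).smulRight (x - q))‖
        ≤ 8 * Real.exp (-1 : ℝ) * Real.sqrt t * ‖p - q‖ := by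
  intro p q
  have h := norm_exp_neg_norm_sq_div_smul_rankOne_self_sub_le ht (x - p) (x - q)
  rwa [sub_sub_sub_cancel_left, norm_sub_rev q p] at h
end
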